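/- arXiv:1502.05775 — 2 statements merged into one kernel-verified Lean document; each statement's English description precedes it below -/
import Mathlib

section
/- If random variables X, Y, Q on finite alphabets satisfy the double Markov conditions X–Y–Q (i.e., X and Q are conditionally independent given Y) and Y–X–Q, then there exists a random variable Q' that is a deterministic function of X and also a deterministic function of Y (i.e., H(Q'|X)=H(Q'|Y)=0), such that XY–Q'–Q forms a Markov chain (Q is conditionally independent of (X,Y) given Q'). -/
/-!
Call `x, x' ∈ 𝒳` linked when some `y` has `p(x, y) > 0` and `p(x', y) > 0`, and let `Q'` be
the class of `X` under the equivalence relation generated by linking (the Gács–Körner common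
part of `X` and `Y`). It is a function of `X`, and almost surely a function of `Y`, since all
`x` with `p(x, y) > 0` lie in one class. The two Markov chains give `p(q | x) = p(q | y)`
whenever `p(x, y) > 0`, so `p(q | x)` is constant on classes: `Q` depends on `X` only through
`Q'`, which together with `Y–X–Q` yields `XY–Q'–Q`.
-/

open Finset

/-- A probability mass function on a finite sample space. -/
def IsPMF {Ω : Type*} [Fintype Ω] (p : Ω → ℝ) : Prop :=
  (∀ ω, 0 ≤ p ω) ∧ ∑ ω, p ω = 1

/-- Probability that the random variable `X` takes the value `x`. -/
noncomputable def pr {Ω 𝒳 : Type*} [Fintype Ω] [DecidableEq 𝒳]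
    (p : Ω → ℝ) (X : Ω → 𝒳) (x : 𝒳) : ℝ :=
  ∑ ω, if X ω = x then p ω else 0

/-- Shannon entropy (in bits) of the random variable `X` under `p`. -/
noncomputable def H {Ω 𝒳 : Type*} [Fintype Ω] [Fintype 𝒳] [DecidableEq 𝒳]
    (p : Ω → ℝ) (X : Ω → 𝒳) : ℝ :=
  -∑ x, pr p X x * Real.logb 2 (pr p X x)

/-- Conditional entropy `H(X|Y)`. -/
noncomputable def condH {Ω 𝒳 𝒴 : Type*} [Fintype Ω] [Fintype 𝒳] [DecidableEq 𝒳]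
    [Fintype 𝒴] [DecidableEq 𝒴] (p : Ω → ℝ) (X : Ω → 𝒳) (Y : Ω → 𝒴) : ℝ :=
  H p (fun ω => (X ω, Y ω)) - H p Y

/-- Mutual information `I(X;Y)`. -/
noncomputable def MI {Ω 𝒳 𝒴 : Type*} [Fintype Ω] [Fintype 𝒳] [DecidableEq 𝒳]
    [Fintype 𝒴] [DecidableEq 𝒴] (p : Ω → ℝ) (X : Ω → 𝒳) (Y : Ω → 𝒴) : ℝ :=
  H p X + H p Y - H p (fun ω => (X ω, Y ω))

/-- Conditional mutual information `I(X;Y|Z)`. -/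
noncomputable def condMI {Ω 𝒳 𝒴 𝒵 : Type*} [Fintype Ω] [Fintype 𝒳] [DecidableEq 𝒳]
    [Fintype 𝒴] [DecidableEq 𝒴] [Fintype 𝒵] [DecidableEq 𝒵]
    (p : Ω → ℝ) (X : Ω → 𝒳) (Y : Ω → 𝒴) (Z : Ω → 𝒵) : ℝ :=
  condH p X Z - condH p X (fun ω => (Y ω, Z ω))

/-- Markov chain A–B–C in pmf form: p(a,b,c)·p(b) = p(a,b)·p(b,c). -/
def MarkovPmf {Ω 𝒜 ℬ 𝒞 : Type*} [Fintype Ω] [DecidableEq 𝒜] [DecidableEq ℬ] [DecidableEq 𝒞]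
    (p : Ω → ℝ) (A : Ω → 𝒜) (B : Ω → ℬ) (C : Ω → 𝒞) : Prop :=
  ∀ a b c, pr p (fun ω => (A ω, B ω, C ω)) (a, b, c) * pr p B b =
    pr p (fun ω => (A ω, B ω)) (a, b) * pr p (fun ω => (B ω, C ω)) (b, c)

section Probability

variable {Ω α β γ : Type*} [Fintype Ω] {p : Ω → ℝ}

theorem IsPMF.nonempty (hp : IsPMF p) : Nonempty Ω := by
  by_contra h
  simpa [not_nonempty_iff.mp h] using hp.2

theorem pr_congr_of_iff [DecidableEq α] [DecidableEq β] {W : Ω → α} {W' : Ω → β} {v : α}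
    {v' : β} (h : ∀ ω, W ω = v ↔ W' ω = v') : pr p W v = pr p W' v' :=
  sum_congr rfl fun ω _ => if_congr (h ω) rfl rfl

theorem pr_eq_zero_of_forall_ne [DecidableEq α] {W : Ω → α} {v : α} (h : ∀ ω, W ω ≠ v) :
    pr p W v = 0 :=
  sum_eq_zero fun ω _ => if_neg (h ω)

theorem pr_nonneg [DecidableEq α] (hp : ∀ ω, 0 ≤ p ω) (W : Ω → α) (v : α) : 0 ≤ pr p W v :=
  sum_nonneg fun ω _ => by split_ifs <;> simp [hp ω]

theorem pr_mono [DecidableEq α] [DecidableEq β] (hp : ∀ ω, 0 ≤ p ω) {W : Ω → α} {W' : Ω → β}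
    {v : α} {v' : β} (h : ∀ ω, W ω = v → W' ω = v') : pr p W v ≤ pr p W' v' :=
  sum_le_sum fun ω _ => by
    by_cases hv : W ω = v
    · simp [hv, h ω hv]
    · split_ifs <;> simp [hp ω]

theorem pr_eq_zero_of_imp [DecidableEq α] [DecidableEq β] (hp : ∀ ω, 0 ≤ p ω) {W : Ω → α}
    {W' : Ω → β} {v : α} {v' : β} (h : ∀ ω, W ω = v → W' ω = v') (h' : pr p W' v' = 0) :
    pr p W v = 0 :=
  le_antisymm (h' ▸ pr_mono hp h) (pr_nonneg hp W v)

theorem pr_apply_ne_zero [DecidableEq α] (hp : ∀ ω, 0 ≤ p ω) (W : Ω → α) {ω : Ω}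
    (hω : p ω ≠ 0) : pr p W (W ω) ≠ 0 := by
  refine (((hp ω).lt_of_ne' hω).trans_le ?_).ne'
  unfold pr
  simpa using single_le_sum (f := fun ω' => if W ω' = W ω then p ω' else 0)
    (fun ω' _ => by split_ifs <;> simp [hp ω']) (mem_univ ω)

theorem pr_congr_ae [DecidableEq α] {W W' : Ω → α} (h : ∀ ω, p ω ≠ 0 → W ω = W' ω) (v : α) :
    pr p W v = pr p W' v :=
  sum_congr rfl fun ω _ => by
    by_cases hω : p ω = 0
    · simp [hω]
    · rw [h ω hω]

theorem pr_comp_eq_sum [Fintype α] [DecidableEq α] [DecidableEq β] (W : Ω → α) (g : α → β)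
    (b : β) : pr p (fun ω => g (W ω)) b = ∑ a, if g a = b then pr p W a else 0 := by
  unfold pr
  rw [← sum_fiberwise univ W]
  refine sum_congr rfl fun a _ => ?_
  rw [sum_filter]
  split_ifs with hb
  · exact sum_congr rfl fun ω _ => by split_ifs <;> simp_all
  · exact sum_eq_zero fun ω _ => by split_ifs <;> simp_all

theorem pr_comp_prod_eq_sum [Fintype α] [DecidableEq α] [Fintype γ] [DecidableEq β]
    [DecidableEq γ] (X : Ω → α) (W : Ω → γ) (g : α → β) (b : β) (w : γ) :
    pr p (fun ω => (g (X ω), W ω)) (b, w) =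
      ∑ a, if g a = b then pr p (fun ω => (X ω, W ω)) (a, w) else 0 := by
  have := pr_comp_eq_sum (p := p) (fun ω => (X ω, W ω)) (Prod.map g id) (b, w)
  rw [Fintype.sum_prod_type] at this
  simpa [Prod.ext_iff, ite_and] using this

end Probability

section Entropy

variable {Ω α β : Type*} [Fintype Ω] {p : Ω → ℝ}

theorem H_congr_ae [Fintype α] [DecidableEq α] {W W' : Ω → α}
    (h : ∀ ω, p ω ≠ 0 → W ω = W' ω) : H p W = H p W' := by
  simp only [H, pr_congr_ae h]

theorem H_comp_injective [Fintype α] [DecidableEq α] [Fintype β] [DecidableEq β] {φ : α → β}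
    (hφ : Function.Injective φ) (W : Ω → α) : H p (fun ω => φ (W ω)) = H p W := by
  unfold H
  congr 1
  refine (Fintype.sum_of_injective φ hφ _ _ (fun b hb => ?_) fun a => ?_).symm
  · rw [pr_eq_zero_of_forall_ne fun ω h => hb ⟨W ω, h⟩]
    simp
  · rw [pr_congr_of_iff fun ω => hφ.eq_iff.symm]

theorem condH_eq_zero_of_ae_eq_comp [Fintype α] [DecidableEq α] [Fintype β] [DecidableEq β]
    {W : Ω → α} {Z : Ω → β} (g : β → α) (h : ∀ ω, p ω ≠ 0 → W ω = g (Z ω)) :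
    condH p W Z = 0 := by
  have hinj : Function.Injective fun z => (g z, z) := fun _ _ h => congrArg Prod.snd h
  rw [condH, H_congr_ae fun ω hω => congrArg (·, Z ω) (h ω hω), H_comp_injective hinj, sub_self]

end Entropy

section Markov

variable {Ω α β γ δ : Type*} [Fintype Ω] {p : Ω → ℝ}
  [DecidableEq α] [DecidableEq β] [DecidableEq γ]

/-- The conditional pmf `P(W = w | X = x)`, which is `0` when `P(X = x) = 0`. -/
noncomputable def condPr (p : Ω → ℝ) (W : Ω → β) (X : Ω → α) (w : β) (x : α) : ℝ :=
  pr p (fun ω => (X ω, W ω)) (x, w) / pr p X x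

theorem pr_prod_eq_mul_condPr (hp : ∀ ω, 0 ≤ p ω) (X : Ω → α) (W : Ω → β) (x : α) (w : β) :
    pr p (fun ω => (X ω, W ω)) (x, w) = pr p X x * condPr p W X w x := by
  by_cases hx : pr p X x = 0
  · rw [hx, zero_mul]
    exact pr_eq_zero_of_imp hp (fun ω h => congrArg Prod.fst h) hx
  · rw [condPr, mul_div_cancel₀ _ hx]

theorem MarkovPmf.pr_eq_mul_condPr (hp : ∀ ω, 0 ≤ p ω) {A : Ω → α} {B : Ω → β} {C : Ω → γ}
    (h : MarkovPmf p A B C) (a : α) (b : β) (c : γ) :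
    pr p (fun ω => (A ω, B ω, C ω)) (a, b, c) =
      pr p (fun ω => (A ω, B ω)) (a, b) * condPr p C B c b := by
  by_cases hb : pr p B b = 0
  · rw [pr_eq_zero_of_imp hp (fun ω h => congrArg (·.2.1) h) hb,
      pr_eq_zero_of_imp hp (fun ω h => congrArg Prod.snd h) hb, zero_mul]
  · rw [condPr, mul_div_assoc', eq_div_iff hb, h a b c]

theorem MarkovPmf.pr_swap_eq_mul_condPr (hp : ∀ ω, 0 ≤ p ω) {X : Ω → α} {Y : Ω → β}
    {Q : Ω → γ} (h : MarkovPmf p Y X Q) (x : α) (y : β) (q : γ) :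
    pr p (fun ω => (X ω, Y ω, Q ω)) (x, y, q) =
      pr p (fun ω => (X ω, Y ω)) (x, y) * condPr p Q X q x := by
  have hXYQ : pr p (fun ω => (X ω, Y ω, Q ω)) (x, y, q) =
      pr p (fun ω => (Y ω, X ω, Q ω)) (y, x, q) :=
    pr_congr_of_iff fun _ => by simp [and_left_comm]
  have hXY : pr p (fun ω => (X ω, Y ω)) (x, y) = pr p (fun ω => (Y ω, X ω)) (y, x) :=
    pr_congr_of_iff fun _ => by simp [and_comm]
  rw [hXYQ, hXY, h.pr_eq_mul_condPr hp]

theorem condPr_eq_of_markovPmf_of_markovPmf (hp : ∀ ω, 0 ≤ p ω) {X : Ω → α} {Y : Ω → β}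
    {Q : Ω → γ} (hXYQ : MarkovPmf p X Y Q) (hYXQ : MarkovPmf p Y X Q) {x : α} {y : β}
    (hxy : pr p (fun ω => (X ω, Y ω)) (x, y) ≠ 0) (q : γ) :
    condPr p Q X q x = condPr p Q Y q y :=
  mul_left_cancel₀ hxy <|
    (hYXQ.pr_swap_eq_mul_condPr hp x y q).symm.trans (hXYQ.pr_eq_mul_condPr hp x y q)

theorem pr_comp_prod_eq_mul_condPr [Fintype α] [Fintype γ] (hp : ∀ ω, 0 ≤ p ω) (X : Ω → α)
    (W : Ω → γ) {g : α → β} {x : α} {w : γ}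
    (hg : ∀ x', g x' = g x → condPr p W X w x' = condPr p W X w x) :
    pr p (fun ω => (g (X ω), W ω)) (g x, w) =
      pr p (fun ω => g (X ω)) (g x) * condPr p W X w x := by
  rw [pr_comp_prod_eq_sum, pr_comp_eq_sum, sum_mul]
  refine sum_congr rfl fun x' _ => ?_
  split_ifs with hx'
  · rw [pr_prod_eq_mul_condPr hp, hg x' hx']
  · rw [zero_mul]

theorem MarkovPmf.prod_comp_of_condPr_eq [Fintype α] [Fintype γ] [DecidableEq δ]
    (hp : ∀ ω, 0 ≤ p ω) {X : Ω → α} {Y : Ω → β} {Q : Ω → γ} (h : MarkovPmf p Y X Q)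
    {g : α → δ} (hg : ∀ x x' q, g x = g x' → condPr p Q X q x = condPr p Q X q x') :
    MarkovPmf p (fun ω => (X ω, Y ω)) (fun ω => g (X ω)) Q := by
  rintro ⟨x, y⟩ c q
  by_cases hc : g x = c
  · subst hc
    have hXYQ : pr p (fun ω => ((X ω, Y ω), g (X ω), Q ω)) ((x, y), g x, q) =
        pr p (fun ω => (X ω, Y ω, Q ω)) (x, y, q) :=
      pr_congr_of_iff fun _ => ⟨fun h => by simp_all, fun h => by simp_all⟩
    have hXY : pr p (fun ω => ((X ω, Y ω), g (X ω))) ((x, y), g x) =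
        pr p (fun ω => (X ω, Y ω)) (x, y) :=
      pr_congr_of_iff fun _ => ⟨fun h => by simp_all, fun h => by simp_all⟩
    rw [hXYQ, hXY, h.pr_swap_eq_mul_condPr hp,
      pr_comp_prod_eq_mul_condPr hp X Q fun x' hx' => hg x' x q hx']
    ring
  · have hne : ∀ ω, (X ω, Y ω) = (x, y) → g (X ω) ≠ c := fun ω h => by rwa [(Prod.mk.inj h).1]
    have hXYQ : pr p (fun ω => ((X ω, Y ω), g (X ω), Q ω)) ((x, y), c, q) = 0 :=
      pr_eq_zero_of_forall_ne fun ω h =>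
        hne ω (Prod.mk.inj h).1 (Prod.mk.inj (Prod.mk.inj h).2).1
    have hXY : pr p (fun ω => ((X ω, Y ω), g (X ω))) ((x, y), c) = 0 :=
      pr_eq_zero_of_forall_ne fun ω h => hne ω (Prod.mk.inj h).1 (Prod.mk.inj h).2
    rw [hXYQ, hXY, zero_mul, zero_mul]

end Markov

section CommonPart

variable {Ω 𝒳 𝒴 𝒬 : Type*} [Fintype Ω] [DecidableEq 𝒳] [DecidableEq 𝒴] {p : Ω → ℝ}
  {X : Ω → 𝒳} {Y : Ω → 𝒴}

def Linked (p : Ω → ℝ) (X : Ω → 𝒳) (Y : Ω → 𝒴) (a b : 𝒳) : Prop :=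
  ∃ y, pr p (fun ω => (X ω, Y ω)) (a, y) ≠ 0 ∧ pr p (fun ω => (X ω, Y ω)) (b, y) ≠ 0

/-- The Gács–Körner common part of `X` and `Y`: a chosen representative of the connected
component of `x` in the bipartite graph on `𝒳 ⊕ 𝒴` with an edge `x — y` whenever
`P(X = x, Y = y) ≠ 0`. -/
noncomputable def commonPart (p : Ω → ℝ) (X : Ω → 𝒳) (Y : Ω → 𝒴) (x : 𝒳) : 𝒳 :=
  (Quotient.mk (Relation.EqvGen.setoid (Linked p X Y)) x).out

theorem commonPart_eq_iff {a b : 𝒳} :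
    commonPart p X Y a = commonPart p X Y b ↔ Relation.EqvGen (Linked p X Y) a b :=
  Quotient.out_inj.trans Quotient.eq

theorem commonPart_eq_of_pr_ne_zero {a b : 𝒳} {y : 𝒴}
    (ha : pr p (fun ω => (X ω, Y ω)) (a, y) ≠ 0) (hb : pr p (fun ω => (X ω, Y ω)) (b, y) ≠ 0) :
    commonPart p X Y a = commonPart p X Y b :=
  commonPart_eq_iff.mpr (.rel _ _ ⟨y, ha, hb⟩)

theorem exists_commonPart_ae_eq_comp [Nonempty 𝒳] (hp : ∀ ω, 0 ≤ p ω) (X : Ω → 𝒳)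
    (Y : Ω → 𝒴) : ∃ g : 𝒴 → 𝒳, ∀ ω, p ω ≠ 0 → commonPart p X Y (X ω) = g (Y ω) := by
  refine ⟨fun y => commonPart p X Y
    (Classical.epsilon fun x => pr p (fun ω => (X ω, Y ω)) (x, y) ≠ 0), fun ω hω => ?_⟩
  have hXY := pr_apply_ne_zero hp (fun ω => (X ω, Y ω)) hω
  exact commonPart_eq_of_pr_ne_zero hXY (Classical.epsilon_spec
    (p := fun x => pr p (fun ω => (X ω, Y ω)) (x, Y ω) ≠ 0) ⟨X ω, hXY⟩)

theorem condPr_eq_of_commonPart_eq [DecidableEq 𝒬] (hp : ∀ ω, 0 ≤ p ω) {Q : Ω → 𝒬}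
    (hXYQ : MarkovPmf p X Y Q) (hYXQ : MarkovPmf p Y X Q) {a b : 𝒳}
    (h : commonPart p X Y a = commonPart p X Y b) (q : 𝒬) :
    condPr p Q X q a = condPr p Q X q b := by
  have hle : Relation.EqvGen.setoid (Linked p X Y) ≤ Setoid.ker fun x q => condPr p Q X q x :=
    Setoid.eqvGen_le fun _ _ ⟨_, ha, hb⟩ => funext fun q =>
      (condPr_eq_of_markovPmf_of_markovPmf hp hXYQ hYXQ ha q).trans
        (condPr_eq_of_markovPmf_of_markovPmf hp hXYQ hYXQ hb q).symm
  exact congrFun (hle (commonPart_eq_iff.mp h)) q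

end CommonPart

/-- double Markov conditions X–Y–Q and Y–X–Q yield a common function Q'
(a deterministic function of X and of Y, since H(Q'|X)=H(Q'|Y)=0; as a function of X it can
be taken with alphabet 𝒳) with XY–Q'–Q a Markov chain. -/
theorem double_markov_lemma {Ω 𝒳 𝒴 𝒬 : Type*} [Fintype Ω] [Fintype 𝒳] [DecidableEq 𝒳]
    [Fintype 𝒴] [DecidableEq 𝒴] [Fintype 𝒬] [DecidableEq 𝒬]
    (p : Ω → ℝ) (X : Ω → 𝒳) (Y : Ω → 𝒴) (Q : Ω → 𝒬)
    (hp : IsPMF p)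
    (hXYQ : MarkovPmf p X Y Q)
    (hYXQ : MarkovPmf p Y X Q) :
    ∃ Q' : Ω → 𝒳,
      condH p Q' X = 0 ∧ condH p Q' Y = 0 ∧
      MarkovPmf p (fun ω => (X ω, Y ω)) Q' Q := by
  have : Nonempty 𝒳 := ⟨X hp.nonempty.some⟩
  obtain ⟨g, hg⟩ := exists_commonPart_ae_eq_comp hp.1 X Y
  exact ⟨fun ω => commonPart p X Y (X ω), condH_eq_zero_of_ae_eq_comp _ fun _ _ => rfl,
    condH_eq_zero_of_ae_eq_comp g hg,
    hYXQ.prod_comp_of_condPr_eq hp.1 fun _ _ q h => condPr_eq_of_commonPart_eq hp.1 hXYQ hYXQ h q⟩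
end

section
/- If X, Y, Q satisfy the double Markov conditions X–Y–Q and Y–X–Q, and Q' is the common function from the double-Markov lemma (H(Q'|X)=H(Q'|Y)=0 and XY–Q'–Q), then I(XY;Q) ≤ H(Q'), with equality if and only if H(Q'|Q)=0. -/
/-! Since `H(Q'|X) = 0`, `Q'` is almost surely a function of `X`, hence of `(X,Y)`, so adjoining
`Q'` changes neither `H(XY)` nor `H(XY,Q)`. The chain `XY – Q' – Q` then gives
`H(XY,Q) = H(XY,Q',Q) = H(XY) + H(Q',Q) - H(Q')`, i.e. `I(XY;Q) = H(Q') - H(Q'|Q)`, and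
`H(Q'|Q) ≥ 0`. All entropies are computed as `-∑ ω, p ω * log₂ pr(X = X ω)`, which makes
the Markov factorisation and the almost-sure equalities pointwise statements. -/

open Finset

/-- `V` is almost surely a function of `U`. -/
def DeterminedBy {Ω 𝒰 𝒱 : Type*} (p : Ω → ℝ) (V : Ω → 𝒱) (U : Ω → 𝒰) : Prop :=
  ∀ ω ω', p ω ≠ 0 → p ω' ≠ 0 → U ω = U ω' → V ω = V ω'

lemma DeterminedBy.of_comp {Ω 𝒰 𝒱 𝒲 : Type*} {p : Ω → ℝ} {U : Ω → 𝒰} {V : Ω → 𝒱}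
    (h : DeterminedBy p V U) (W : Ω → 𝒲) (hUW : ∀ ω ω', W ω = W ω' → U ω = U ω') :
    DeterminedBy p V W :=
  fun ω ω' hω hω' hW => h ω ω' hω hω' (hUW ω ω' hW)

section

variable {Ω : Type*} [Fintype Ω] {p : Ω → ℝ}

section pr

variable {𝒳 : Type*} [DecidableEq 𝒳]

lemma self_le_pr (hp : ∀ ω, 0 ≤ p ω) (X : Ω → 𝒳) (ω : Ω) : p ω ≤ pr p X (X ω) := by
  simpa [pr] using Finset.single_le_sum (f := fun ω' => if X ω' = X ω then p ω' else 0)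
    (fun ω' _ => by split_ifs <;> simp [hp ω']) (Finset.mem_univ ω)

lemma pr_pos (hp : ∀ ω, 0 ≤ p ω) (X : Ω → 𝒳) {ω : Ω} (hω : p ω ≠ 0) : 0 < pr p X (X ω) :=
  ((hp ω).lt_of_ne' hω).trans_le (self_le_pr hp X ω)

variable {𝒴 : Type*} [DecidableEq 𝒴]

lemma pr_prod_le (hp : ∀ ω, 0 ≤ p ω) (X : Ω → 𝒳) (Y : Ω → 𝒴) (x : 𝒳) (y : 𝒴) :
    pr p (fun ω => (X ω, Y ω)) (x, y) ≤ pr p Y y :=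
  Finset.sum_le_sum fun ω _ => by split_ifs <;> simp_all

lemma pr_prod_add_pr_prod_le (hp : ∀ ω, 0 ≤ p ω) (X : Ω → 𝒳) (Y : Ω → 𝒴) {x x' : 𝒳}
    (hx : x ≠ x') (y : 𝒴) :
    pr p (fun ω => (X ω, Y ω)) (x, y) + pr p (fun ω => (X ω, Y ω)) (x', y) ≤ pr p Y y := by
  rw [pr, pr, ← Finset.sum_add_distrib]
  refine Finset.sum_le_sum fun ω _ => ?_
  by_cases hXx : X ω = x <;> by_cases hXx' : X ω = x' <;> by_cases hY : Y ω = y <;>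
    simp_all

lemma condH_summand_nonneg (hp : ∀ ω, 0 ≤ p ω) (X : Ω → 𝒳) (Y : Ω → 𝒴) (ω : Ω) :
    0 ≤ p ω *
      (Real.logb 2 (pr p Y (Y ω)) - Real.logb 2 (pr p (fun ω => (X ω, Y ω)) (X ω, Y ω))) := by
  by_cases hω : p ω = 0
  · simp [hω]
  exact mul_nonneg (hp ω) (sub_nonneg.2 (Real.logb_le_logb_of_le one_lt_two
    (pr_pos hp (fun ω => (X ω, Y ω)) hω) (pr_prod_le hp X Y (X ω) (Y ω))))

end pr

section entropy

variable {𝒳 𝒴 𝒵 : Type*} [Fintype 𝒳] [DecidableEq 𝒳] [Fintype 𝒴] [DecidableEq 𝒴]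
  [Fintype 𝒵] [DecidableEq 𝒵]

lemma H_eq_neg_sum_mul_logb_pr (X : Ω → 𝒳) :
    H p X = -∑ ω, p ω * Real.logb 2 (pr p X (X ω)) := by
  unfold H
  conv_lhs => enter [1, 2, x]; rw [pr, Finset.sum_mul]
  rw [Finset.sum_comm]
  simp only [ite_mul, zero_mul, Finset.sum_ite_eq, Finset.mem_univ, if_true]
  rfl

lemma H_congr (X : Ω → 𝒳) (Y : Ω → 𝒴)
    (h : ∀ ω, p ω ≠ 0 → pr p X (X ω) = pr p Y (Y ω)) : H p X = H p Y := by
  rw [H_eq_neg_sum_mul_logb_pr, H_eq_neg_sum_mul_logb_pr]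
  congr 1
  refine Finset.sum_congr rfl fun ω _ => ?_
  by_cases hω : p ω = 0
  · simp [hω]
  · rw [h ω hω]

lemma H_comp_of_injective (X : Ω → 𝒳) {g : 𝒳 → 𝒴} (hg : g.Injective) :
    H p (fun ω => g (X ω)) = H p X :=
  H_congr _ _ fun ω _ => Finset.sum_congr rfl fun ω' _ => by simp only [hg.eq_iff]

lemma DeterminedBy.H_prod_eq {X : Ω → 𝒳} {Y : Ω → 𝒴} (h : DeterminedBy p Y X) :
    H p (fun ω => (X ω, Y ω)) = H p X :=
  H_congr _ _ fun ω hω => Finset.sum_congr rfl fun ω' _ => by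
    by_cases hω' : p ω' = 0
    · simp [hω']
    · by_cases hX : X ω' = X ω
      · simp [hX, h ω' ω hω' hω hX]
      · simp [hX]

lemma H_prod_prod_of_markov (hp : ∀ ω, 0 ≤ p ω) (X : Ω → 𝒳) (Y : Ω → 𝒴) (Z : Ω → 𝒵)
    (h : MarkovPmf p X Y Z) :
    H p (fun ω => (X ω, Y ω, Z ω)) =
      H p (fun ω => (X ω, Y ω)) + H p (fun ω => (Y ω, Z ω)) - H p Y := by
  rw [eq_sub_iff_add_eq]
  simp only [H_eq_neg_sum_mul_logb_pr]
  rw [← neg_add, ← neg_add, ← Finset.sum_add_distrib, ← Finset.sum_add_distrib, neg_inj]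
  refine Finset.sum_congr rfl fun ω _ => ?_
  by_cases hω : p ω = 0
  · simp [hω]
  have hXY := pr_pos hp (fun ω => (X ω, Y ω)) hω
  have hYZ := pr_pos hp (fun ω => (Y ω, Z ω)) hω
  have hY := pr_pos hp Y hω
  have hfactor : pr p (fun ω => (X ω, Y ω, Z ω)) (X ω, Y ω, Z ω) =
      pr p (fun ω => (X ω, Y ω)) (X ω, Y ω) * pr p (fun ω => (Y ω, Z ω)) (Y ω, Z ω) /
        pr p Y (Y ω) := by
    rw [eq_div_iff hY.ne', h]
  rw [hfactor, Real.logb_div (mul_pos hXY hYZ).ne' hY.ne', Real.logb_mul hXY.ne' hYZ.ne']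
  ring

lemma condH_eq_sum (X : Ω → 𝒳) (Y : Ω → 𝒴) :
    condH p X Y = ∑ ω, p ω *
      (Real.logb 2 (pr p Y (Y ω)) - Real.logb 2 (pr p (fun ω => (X ω, Y ω)) (X ω, Y ω))) := by
  rw [condH, H_eq_neg_sum_mul_logb_pr, H_eq_neg_sum_mul_logb_pr]
  simp only [mul_sub, Finset.sum_sub_distrib]
  ring

lemma condH_nonneg (hp : ∀ ω, 0 ≤ p ω) (X : Ω → 𝒳) (Y : Ω → 𝒴) : 0 ≤ condH p X Y := by
  rw [condH_eq_sum]
  exact Finset.sum_nonneg fun ω _ => condH_summand_nonneg hp X Y ω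

lemma pr_prod_eq_of_condH_eq_zero (hp : ∀ ω, 0 ≤ p ω) {X : Ω → 𝒳} {Y : Ω → 𝒴}
    (h : condH p X Y = 0) {ω : Ω} (hω : p ω ≠ 0) :
    pr p (fun ω => (X ω, Y ω)) (X ω, Y ω) = pr p Y (Y ω) := by
  rw [condH_eq_sum, Finset.sum_eq_zero_iff_of_nonneg fun ω _ => condH_summand_nonneg hp X Y ω]
    at h
  have hlog := sub_eq_zero.1 ((mul_eq_zero.1 (h ω (Finset.mem_univ ω))).resolve_left hω)
  exact (Real.logb_injOn_pos one_lt_two (pr_pos hp Y hω) (pr_pos hp _ hω) hlog).symm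

lemma determinedBy_of_condH_eq_zero (hp : ∀ ω, 0 ≤ p ω) {X : Ω → 𝒳} {Y : Ω → 𝒴}
    (h : condH p X Y = 0) : DeterminedBy p X Y := by
  intro ω ω' hω hω' hY
  by_contra hX
  have hsum := pr_prod_add_pr_prod_le hp X Y hX (Y ω)
  have hω'_eq := pr_prod_eq_of_condH_eq_zero hp h hω'
  rw [← hY] at hω'_eq
  linarith [pr_prod_eq_of_condH_eq_zero hp h hω, pr_pos hp Y hω]

lemma MI_eq_H_sub_condH_of_markov (hp : ∀ ω, 0 ≤ p ω) {Z : Ω → 𝒳} {V : Ω → 𝒴} {W : Ω → 𝒵}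
    (hV : DeterminedBy p V Z) (hM : MarkovPmf p Z V W) :
    MI p Z W = H p V - condH p V W := by
  have hswap : Function.Injective fun t : (𝒳 × 𝒵) × 𝒴 => (t.1.1, t.2, t.1.2) :=
    fun s t hst => by simp_all [Prod.ext_iff]
  have hZW : H p (fun ω => (Z ω, W ω)) = H p Z + H p (fun ω => (V ω, W ω)) - H p V :=
    calc H p (fun ω => (Z ω, W ω))
        = H p (fun ω => ((Z ω, W ω), V ω)) :=
          (hV.of_comp _ fun _ _ h => congrArg Prod.fst h).H_prod_eq.symm
      _ = H p (fun ω => (Z ω, V ω, W ω)) := (H_comp_of_injective _ hswap).symm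
      _ = H p Z + H p (fun ω => (V ω, W ω)) - H p V := by
          rw [H_prod_prod_of_markov hp Z V W hM, hV.H_prod_eq]
  rw [MI, condH, hZW]
  ring

end entropy

end

theorem double_markov_entropy_bound_general {Ω 𝒳 𝒴 𝒬 𝒬' : Type*} [Fintype Ω]
    [Fintype 𝒳] [DecidableEq 𝒳] [Fintype 𝒴] [DecidableEq 𝒴]
    [Fintype 𝒬] [DecidableEq 𝒬] [Fintype 𝒬'] [DecidableEq 𝒬']
    (p : Ω → ℝ) (X : Ω → 𝒳) (Y : Ω → 𝒴) (Q : Ω → 𝒬) (Q' : Ω → 𝒬')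
    (hp : IsPMF p)
    (hQ'X : condH p Q' X = 0)
    (hMC : MarkovPmf p (fun ω => (X ω, Y ω)) Q' Q) :
    MI p (fun ω => (X ω, Y ω)) Q ≤ H p Q' ∧
    (MI p (fun ω => (X ω, Y ω)) Q = H p Q' ↔ condH p Q' Q = 0) := by
  have hQ'XY : DeterminedBy p Q' (fun ω => (X ω, Y ω)) :=
    (determinedBy_of_condH_eq_zero hp.1 hQ'X).of_comp _ fun _ _ h => congrArg Prod.fst h
  have hMI := MI_eq_H_sub_condH_of_markov hp.1 hQ'XY hMC
  have hcondH := condH_nonneg hp.1 Q' Q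
  exact ⟨by linarith, ⟨fun _ => by linarith, fun _ => by linarith⟩⟩

/-- under the double Markov conditions, with Q' the common function from the
double-Markov lemma (H(Q'|X)=H(Q'|Y)=0 and XY–Q'–Q), one has I(XY;Q) ≤ H(Q'),
with equality iff H(Q'|Q)=0. -/
theorem double_markov_entropy_bound {Ω 𝒳 𝒴 𝒬 𝒬' : Type*} [Fintype Ω]
    [Fintype 𝒳] [DecidableEq 𝒳] [Fintype 𝒴] [DecidableEq 𝒴]
    [Fintype 𝒬] [DecidableEq 𝒬] [Fintype 𝒬'] [DecidableEq 𝒬']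
    (p : Ω → ℝ) (X : Ω → 𝒳) (Y : Ω → 𝒴) (Q : Ω → 𝒬) (Q' : Ω → 𝒬')
    (hp : IsPMF p)
    (hXYQ : MarkovPmf p X Y Q)
    (hYXQ : MarkovPmf p Y X Q)
    (hQ'X : condH p Q' X = 0)
    (hQ'Y : condH p Q' Y = 0)
    (hMC : MarkovPmf p (fun ω => (X ω, Y ω)) Q' Q) :
    MI p (fun ω => (X ω, Y ω)) Q ≤ H p Q' ∧
    (MI p (fun ω => (X ω, Y ω)) Q = H p Q' ↔ condH p Q' Q = 0) :=
  double_markov_entropy_bound_general p X Y Q Q' hp hQ'X hMC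
end
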